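/- The function φ̃₃ satisfies, for all y ∈ ℝ, the separated eigenvalue equation with eigenvalue λ = 2 and angular parameter l = c: (1 + Q/(2P(y)))·φ̃₃''(y) + (P'(y)/(2P(y)))·φ̃₃'(y) + (2 − c²/P(y))·φ̃₃(y) = 0. -/

import Mathlib

open Real

/-- Rescaled solution `φ̃₁(y) = √((b²+c²−a²)/(2(c²−a²)))·sin y`. -/
noncomputable def phi1 (a b c y : ℝ) : ℝ :=
  Real.sqrt ((b ^ 2 + c ^ 2 - a ^ 2) / (2 * (c ^ 2 - a ^ 2))) * Real.sin y

/-- Rescaled solution `φ̃₂(y) = √((a²+c²−b²)/(2(c²−b²)))·cos y`. -/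
noncomputable def phi2 (a b c y : ℝ) : ℝ :=
  Real.sqrt ((a ^ 2 + c ^ 2 - b ^ 2) / (2 * (c ^ 2 - b ^ 2))) * Real.cos y

/-- Rescaled solution `φ̃₃(y) = √((a²+b²−c²)/(2(b²−c²)))·√(1 − ((b²−a²)/(c²−a²))·sin² y)`. -/
noncomputable def phi3 (a b c y : ℝ) : ℝ :=
  Real.sqrt ((a ^ 2 + b ^ 2 - c ^ 2) / (2 * (b ^ 2 - c ^ 2))) *
    Real.sqrt (1 - (b ^ 2 - a ^ 2) / (c ^ 2 - a ^ 2) * Real.sin y ^ 2)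

/-- `P(y) = (c² + (b²−a²)·cos 2y)/2`. -/
noncomputable def Pm (a b c y : ℝ) : ℝ := (c ^ 2 + (b ^ 2 - a ^ 2) * Real.cos (2 * y)) / 2

/-- `Q = c² − a² − b²`. -/
noncomputable def Qm (a b c : ℝ) : ℝ := c ^ 2 - a ^ 2 - b ^ 2

/-!
Up to the constant factor, `φ̃₃ = √S` with `S y = 1 - k sin² y`, `k = (b² - a²)/(c² - a²)`,
and `S > 0` because `k < 1`. For `f = √S` the equation `A f'' + B f' + C f = 0` is equivalent
to `A (2 S S'' - S'²) + 2 B S S' + 4 C S² = 0`. Here `S' = -k sin 2y`, `S'' = -2k cos 2y`,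
`P' = -(b² - a²) sin 2y`, `2P - c² = (b² - a²) cos 2y`, and the key identity `Q + 2P = 2 (c² - a²) S`
turns `2P` times the left-hand side into a multiple of `(b² - a²) - k (c² - a²) = 0`.
-/
section SqrtOde

variable {S S' S'' : ℝ → ℝ}

theorem deriv_sqrt_of_hasDerivAt (hS : ∀ x, HasDerivAt S (S' x) x) (hpos : ∀ x, 0 < S x) :
    deriv (fun x => √(S x)) = fun x => S' x / (2 * √(S x)) :=
  funext fun x => ((hS x).sqrt (hpos x).ne').deriv

theorem hasDerivAt_deriv_sqrt (hS : ∀ x, HasDerivAt S (S' x) x)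
    (hS' : ∀ x, HasDerivAt S' (S'' x) x) (hpos : ∀ x, 0 < S x) (x : ℝ) :
    HasDerivAt (deriv fun x => √(S x))
      ((2 * S x * S'' x - S' x ^ 2) / (4 * S x * √(S x))) x := by
  rw [deriv_sqrt_of_hasDerivAt hS hpos]
  have hsqrt : 0 < √(S x) := Real.sqrt_pos.2 (hpos x)
  refine ((hS' x).div (((hS x).sqrt (hpos x).ne').const_mul 2) (by positivity)).congr_deriv ?_
  have hsq := Real.sq_sqrt (hpos x).le
  have hSx := (hpos x).ne'
  field_simp
  rw [hsq]
  field_simp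
  ring

theorem sqrt_solves_linear_ode (hS : ∀ x, HasDerivAt S (S' x) x)
    (hS' : ∀ x, HasDerivAt S' (S'' x) x) (hpos : ∀ x, 0 < S x) {A B C x : ℝ}
    (h : A * (2 * S x * S'' x - S' x ^ 2) + 2 * B * S x * S' x + 4 * C * S x ^ 2 = 0) :
    A * deriv (deriv fun x => √(S x)) x + B * deriv (fun x => √(S x)) x + C * √(S x) = 0 := by
  rw [(hasDerivAt_deriv_sqrt hS hS' hpos x).deriv, deriv_sqrt_of_hasDerivAt hS hpos]
  have hsqrt : 0 < √(S x) := Real.sqrt_pos.2 (hpos x)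
  have hsq := Real.sq_sqrt (hpos x).le
  have hSx := (hpos x).ne'
  field_simp
  rw [hsq]
  field_simp
  linear_combination 2 * h

end SqrtOde

theorem one_sub_mul_sin_sq_pos {k : ℝ} (hk : k < 1) (y : ℝ) : 0 < 1 - k * sin y ^ 2 := by
  have h1 := sin_sq_le_one y
  rcases le_or_gt k 0 with hk0 | hk0
  · nlinarith [sq_nonneg (sin y)]
  · nlinarith

theorem hasDerivAt_one_sub_mul_sin_sq (k y : ℝ) :
    HasDerivAt (fun y => 1 - k * sin y ^ 2) (-(k * sin (2 * y))) y := by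
  refine ((((hasDerivAt_sin y).pow 2).const_mul k).const_sub 1).congr_deriv ?_
  rw [sin_two_mul]
  ring

theorem hasDerivAt_neg_mul_sin_two_mul (k y : ℝ) :
    HasDerivAt (fun y => -(k * sin (2 * y))) (-(2 * k * cos (2 * y))) y := by
  refine (((((hasDerivAt_id' y).const_mul 2).sin).const_mul k).neg).congr_deriv ?_
  ring

theorem Pm_pos {a b c : ℝ} (ha : a ^ 2 < c ^ 2) (hb : b ^ 2 < c ^ 2) (y : ℝ) :
    0 < Pm a b c y := by
  unfold Pm
  have := neg_one_le_cos (2 * y)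
  have := cos_le_one (2 * y)
  rcases le_total (a ^ 2) (b ^ 2) with hab | hab
  · nlinarith
  · nlinarith

theorem hasDerivAt_Pm (a b c y : ℝ) :
    HasDerivAt (Pm a b c) (-((b ^ 2 - a ^ 2) * sin (2 * y))) y := by
  refine ((((((hasDerivAt_id' y).const_mul 2).cos).const_mul (b ^ 2 - a ^ 2)).const_add
    (c ^ 2)).div_const 2).congr_deriv ?_
  ring

theorem Qm_add_two_mul_Pm {a b c : ℝ} (hac : c ^ 2 - a ^ 2 ≠ 0) (y : ℝ) :
    Qm a b c + 2 * Pm a b c y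
      = 2 * (c ^ 2 - a ^ 2) * (1 - (b ^ 2 - a ^ 2) / (c ^ 2 - a ^ 2) * sin y ^ 2) := by
  rw [Qm, Pm, cos_two_mul_eq_one_sub]
  field_simp
  ring

theorem two_mul_Pm_sub_sq (a b c y : ℝ) :
    2 * Pm a b c y - c ^ 2 = (b ^ 2 - a ^ 2) * cos (2 * y) := by
  rw [Pm]
  ring

theorem phi3_separated_equation_general (a b c : ℝ) (ha : a ^ 2 < c ^ 2) (hb : b ^ 2 < c ^ 2) :
    ∀ y : ℝ,
      (1 + Qm a b c / (2 * Pm a b c y)) * deriv (deriv (phi3 a b c)) y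
        + deriv (Pm a b c) y / (2 * Pm a b c y) * deriv (phi3 a b c) y
        + (2 - c ^ 2 / Pm a b c y) * phi3 a b c y = 0 := by
  intro y
  have hac : c ^ 2 - a ^ 2 ≠ 0 := (sub_pos.2 ha).ne'
  have hQP := Qm_add_two_mul_Pm (b := b) hac y
  set k := (b ^ 2 - a ^ 2) / (c ^ 2 - a ^ 2)
  have hk1 : k < 1 := (div_lt_one (sub_pos.2 ha)).2 (by linarith)
  have hkac : k * (c ^ 2 - a ^ 2) = b ^ 2 - a ^ 2 := div_mul_cancel₀ _ hac
  have hP := (Pm_pos ha hb y).ne'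
  have hPc := two_mul_Pm_sub_sq a b c y
  have hphi : phi3 a b c = fun y =>
      √((a ^ 2 + b ^ 2 - c ^ 2) / (2 * (b ^ 2 - c ^ 2))) * √(1 - k * sin y ^ 2) := rfl
  rw [hphi, deriv_const_mul_field', deriv_const_mul_field', (hasDerivAt_Pm a b c y).deriv]
  have hode := sqrt_solves_linear_ode (hasDerivAt_one_sub_mul_sin_sq k)
    (hasDerivAt_neg_mul_sin_two_mul k) (one_sub_mul_sin_sq_pos hk1)
    (A := 1 + Qm a b c / (2 * Pm a b c y))
    (B := -((b ^ 2 - a ^ 2) * sin (2 * y)) / (2 * Pm a b c y))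
    (C := 2 - c ^ 2 / Pm a b c y) (x := y) ?_
  · linear_combination √((a ^ 2 + b ^ 2 - c ^ 2) / (2 * (b ^ 2 - c ^ 2))) * hode
  · set S := 1 - k * sin y ^ 2
    field_simp
    linear_combination k * (-(4 * S * cos (2 * y)) - k * sin (2 * y) ^ 2) * hQP + 8 * S ^ 2 * hPc
      - (8 * S ^ 2 * cos (2 * y) + 2 * k * S * sin (2 * y) ^ 2) * hkac

/-- The function `φ̃` satisfies, for all `y ∈ ℝ`, the separated
eigenvalue equation with eigenvalue `λ = 2` and angular parameter `l = c`:
`(1 + Q/(2P(y)))·φ̃'' + (P'(y)/(2P(y)))·φ̃' + (2 − l²/P(y))·φ̃ = 0`. -/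
theorem phi3_separated_equation (a b c : ℝ) (ha : a ^ 2 < c ^ 2) (hb : b ^ 2 < c ^ 2)
    (habc : a ^ 2 + b ^ 2 ≤ c ^ 2) :
    ∀ y : ℝ,
      (1 + Qm a b c / (2 * Pm a b c y)) * deriv (deriv (phi3 a b c)) y
        + deriv (Pm a b c) y / (2 * Pm a b c y) * deriv (phi3 a b c) y
        + (2 - c ^ 2 / Pm a b c y) * phi3 a b c y = 0 :=
  phi3_separated_equation_general a b c ha hb
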